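/- For all constants β₁ > 0 and 0 < β₂ < 1 there is a constant C > 0 such that for every η > 0 there is n₀ with the following property for all n ≥ n₀. Let A be an n × n real matrix with singular values σ₁ ≥ … ≥ σₙ satisfying σ₁ ≤ n^{β₁}, with an orthonormal system of unit singular vectors v₁, …, vₙ (so AᵀA vᵢ = σᵢ² vᵢ), let d ≥ n^{1−β₂}, and let V := span{v₁, …, v_d}. Let E be an n × n random matrix with independent entries each equal to +1 or −1 with probability 1/2. Then with probability at least 1 − η, simultaneously for all unit vectors v ∈ V: ‖(A + E)v‖² ≤ Σ_{i=1}^{n} (v · vᵢ)² σᵢ² + C(n + σ₁ √(d log n)). -/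

import Mathlib

open MeasureTheory ProbabilityTheory Matrix

noncomputable def eucNorm {n : ℕ} (v : Fin n → ℝ) : ℝ := Real.sqrt (∑ i, v i ^ 2)

/-- The `k`-th largest singular value (k ≥ 1) of a square real matrix, via the
Courant–Fischer minimax characterization. -/
noncomputable def singVal {n : ℕ} (M : Matrix (Fin n) (Fin n) ℝ) (k : ℕ) : ℝ :=
  sSup {x : ℝ | ∃ H : Submodule ℝ (Fin n → ℝ), Module.finrank ℝ H = k ∧
    x = sInf {y : ℝ | ∃ v ∈ H, eucNorm v = 1 ∧ y = eucNorm (M.mulVec v)}}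

/-- The spectral norm of a square real matrix. -/
noncomputable def specNorm {n : ℕ} (M : Matrix (Fin n) (Fin n) ℝ) : ℝ :=
  sSup {x : ℝ | ∃ v : Fin n → ℝ, eucNorm v = 1 ∧ x = eucNorm (M.mulVec v)}

/-- `v` is a unit singular vector of `M` corresponding to the singular value `σ`. -/
def IsUnitSingVec {n : ℕ} (M : Matrix (Fin n) (Fin n) ℝ) (σ : ℝ) (v : Fin n → ℝ) : Prop :=
  eucNorm v = 1 ∧ (Mᵀ * M).mulVec v = σ ^ 2 • v

/-- `sin ∠(u,v) = √(1 - (u·v)²)` for unit vectors `u, v`. -/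
noncomputable def sinAngle {n : ℕ} (u v : Fin n → ℝ) : ℝ :=
  Real.sqrt (1 - (∑ i, u i * v i) ^ 2)

/-- `E` is a random Bernoulli matrix: independent entries, each `±1` with probability `1/2`. -/
def IsBernoulliMatrix {Ω : Type} [MeasurableSpace Ω] (μ : Measure Ω) {n : ℕ}
    (E : Ω → Matrix (Fin n) (Fin n) ℝ) : Prop :=
  (∀ i j, Measurable fun ω => E ω i j) ∧
  iIndepFun (fun (p : Fin n × Fin n) (ω : Ω) => E ω p.1 p.2) μ ∧
  ∀ i j, μ {ω | E ω i j = 1} = 1/2 ∧ μ {ω | E ω i j = -1} = 1/2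

open Metric Real Module Filter
open scoped NNReal ENNReal RealInnerProductSpace Topology

/-!
Write `(A + E) x = A x + E x`, so that
`‖(A + E) x‖² = ‖A x‖² + 2 ⟪A x, E x⟫ + ‖E x‖²`, where `‖A x‖² = ∑ᵢ (x · vᵢ)² σᵢ²` by the spectral
decomposition of `AᵀA`. For fixed unit vectors `y, z` the form `⟪y, E z⟫ = ∑ yᵢ zⱼ Eᵢⱼ` is a
Rademacher sum of variance `1`, so Hoeffding gives `P(⟪y, E z⟫ ≥ a) ≤ exp (-a² / 2)`. A union bound
over `1/4`-nets (of size `9 ^ dim`) of the unit spheres of `ℝⁿ`, `V` and `A V` shows that, outside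
an event of probability `exp (-2n) + exp (-2d)`, the form is at most `4√n` on the net of
`ℝⁿ × V` and at most `4√d` on that of `A V × V`, hence at most twice that on the spheres. Then
`‖E x‖ ≤ 8√n` and `⟪A x, E x⟫ ≤ 8√d σ₁`, which gives the bound with `C = 64`.
-/

theorem eucNorm_eq_norm_toLp {n : ℕ} (x : Fin n → ℝ) : eucNorm x = ‖WithLp.toLp 2 x‖ := by
  simp [eucNorm, EuclideanSpace.norm_eq]

theorem eucNorm_smul {n : ℕ} (c : ℝ) (x : Fin n → ℝ) : eucNorm (c • x) = |c| * eucNorm x := by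
  simp [eucNorm_eq_norm_toLp, WithLp.toLp_smul, norm_smul]

theorem eucNorm_mulVec_le_singVal_one {n : ℕ} (M : Matrix (Fin n) (Fin n) ℝ) {x : Fin n → ℝ}
    (hx : eucNorm x = 1) : eucNorm (M *ᵥ x) ≤ singVal M 1 := by
  have hbdd : BddAbove {r : ℝ | ∃ H : Submodule ℝ (Fin n → ℝ), finrank ℝ H = 1 ∧
      r = sInf {y : ℝ | ∃ v ∈ H, eucNorm v = 1 ∧ y = eucNorm (M *ᵥ v)}} := by
    refine ⟨‖toEuclideanCLM (𝕜 := ℝ) M‖, ?_⟩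
    rintro _ ⟨H, hH, rfl⟩
    obtain ⟨u, huH, hu0⟩ := Submodule.exists_mem_ne_zero_of_ne_bot (p := H)
      (by rintro rfl; simp at hH)
    have hu : 0 < eucNorm u := by
      rw [eucNorm_eq_norm_toLp]; simpa using hu0
    have hw : eucNorm ((eucNorm u)⁻¹ • u) = 1 := by
      rw [eucNorm_smul, abs_inv, abs_of_pos hu, inv_mul_cancel₀ hu.ne']
    refine csInf_le_of_le ⟨0, by rintro _ ⟨_, _, _, rfl⟩; exact sqrt_nonneg _⟩
      ⟨_, H.smul_mem _ huH, hw, rfl⟩ ?_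
    rw [eucNorm_eq_norm_toLp, ← toEuclideanCLM_toLp]
    refine ((toEuclideanCLM (𝕜 := ℝ) M).le_opNorm _).trans_eq ?_
    rw [← eucNorm_eq_norm_toLp, hw, mul_one]
  have hx0 : x ≠ 0 := by rintro rfl; simp [eucNorm] at hx
  refine le_csSup_of_le hbdd ⟨Submodule.span ℝ {x}, finrank_span_singleton hx0, rfl⟩
    (le_csInf ⟨_, x, Submodule.mem_span_singleton_self x, hx, rfl⟩ ?_)
  rintro _ ⟨w, hw, hw1, rfl⟩
  obtain ⟨c, rfl⟩ := Submodule.mem_span_singleton.1 hw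
  rw [eucNorm_smul, hx, mul_one] at hw1
  rw [mulVec_smul, eucNorm_smul, hw1, one_mul]

theorem dotProduct_mulVec_eq_sum_of_orthonormal {ι : Type*} [Fintype ι] [DecidableEq ι]
    (M : Matrix ι ι ℝ) (v : ι → ι → ℝ) (s : ι → ℝ)
    (hov : ∀ i j, ∑ l, v i l * v j l = if i = j then 1 else 0)
    (heig : ∀ i, M *ᵥ v i = s i • v i) (x : ι → ℝ) :
    x ⬝ᵥ (M *ᵥ x) = ∑ i, (∑ l, x l * v i l) ^ 2 * s i := by
  set P : Matrix ι ι ℝ := Matrix.of v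
  have hPtP : Pᵀ * P = 1 := mul_eq_one_comm.1 <| by
    ext i j
    simpa [P, mul_apply, one_apply] using hov i j
  have hMP : M * Pᵀ = Pᵀ * diagonal s := by
    ext l i
    rw [mul_diagonal]
    simpa [P, mul_apply, mulVec, dotProduct, mul_comm] using congrFun (heig i) l
  have hM : M = Pᵀ * diagonal s * P := by
    rw [← hMP, Matrix.mul_assoc, hPtP, Matrix.mul_one]
  rw [hM, ← mulVec_mulVec, ← mulVec_mulVec, dotProduct_mulVec, vecMul_transpose, dotProduct,
    Finset.sum_congr rfl]
  intro i _
  rw [mulVec_diagonal]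
  simp only [P, mulVec, dotProduct, of_apply, mul_comm (x _)]
  ring

theorem sq_eucNorm_mulVec {n : ℕ} (A : Matrix (Fin n) (Fin n) ℝ) (x : Fin n → ℝ) :
    eucNorm (A *ᵥ x) ^ 2 = x ⬝ᵥ ((Aᵀ * A) *ᵥ x) := by
  rw [eucNorm, sq_sqrt (Finset.sum_nonneg fun _ _ => sq_nonneg _), ← mulVec_mulVec,
    dotProduct_mulVec, vecMul_transpose]
  simp [dotProduct, sq]

theorem finrank_span_setOf_val_lt_le {M : Type*} [AddCommGroup M] [Module ℝ M] {n : ℕ}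
    (v : Fin n → M) (d : ℕ) :
    finrank ℝ (Submodule.span ℝ {y | ∃ i : Fin n, i.val < d ∧ y = v i}) ≤ d := by
  have : {y | ∃ i : Fin n, i.val < d ∧ y = v i} =
      Set.range fun i : {i : Fin n // i.val < d} => v i := by
    ext
    simp [eq_comm]
  rw [this]
  refine (finrank_range_le_card _).trans ?_
  rw [Fintype.card_subtype, Fin.card_filter_val_lt]
  exact min_le_right _ _

section SphereNet

variable {E : Type*} [NormedAddCommGroup E] [NormedSpace ℝ E] [FiniteDimensional ℝ E]

theorem card_le_of_isSeparated_sphere {ε : ℝ≥0} (hε : 0 < ε) {C : Finset E}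
    (hC : (C : Set E) ⊆ sphere 0 1) (hsep : IsSeparated (ε : ℝ≥0∞) (C : Set E)) :
    (C.card : ℝ) ≤ (1 + 2 / ε) ^ finrank ℝ E := by
  borelize E
  set μ : Measure E := Measure.addHaar
  set r : ℝ := ε / 2 with hr_def
  have hr : 0 < r := by positivity
  have hdisj : (C : Set E).PairwiseDisjoint (ball · r) := fun x hx y hy hxy => by
    refine ball_disjoint_ball ?_
    have : (ε : ℝ≥0∞) < edist x y := hsep hx hy hxy
    rw [edist_nndist, ENNReal.coe_lt_coe, ← NNReal.coe_lt_coe, coe_nndist] at this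
    linarith
  have hsub : ⋃ x ∈ C, ball x r ⊆ ball 0 (1 + r) := by
    refine Set.iUnion₂_subset fun x hx => ball_subset_ball' ?_
    rw [dist_zero_right, mem_sphere_zero_iff_norm.1 (hC hx), add_comm]
  have hvol : (C.card : ℝ≥0∞) * (ENNReal.ofReal (r ^ finrank ℝ E) * μ (ball 0 1))
      ≤ ENNReal.ofReal ((1 + r) ^ finrank ℝ E) * μ (ball 0 1) := by
    calc (C.card : ℝ≥0∞) * (ENNReal.ofReal (r ^ finrank ℝ E) * μ (ball 0 1))
        = ∑ x ∈ C, μ (ball x r) := by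
          simp only [μ.addHaar_ball_of_pos _ hr, Finset.sum_const, nsmul_eq_mul]
      _ = μ (⋃ x ∈ C, ball x r) :=
          (measure_biUnion_finset hdisj fun x _ => measurableSet_ball).symm
      _ ≤ μ (ball 0 (1 + r)) := measure_mono hsub
      _ = _ := μ.addHaar_ball_of_pos _ (by positivity)
  rw [← mul_assoc, ENNReal.mul_le_mul_iff_left (measure_ball_pos μ _ one_pos).ne'
    measure_ball_lt_top.ne, ← ENNReal.ofReal_natCast, ← ENNReal.ofReal_mul (by positivity),
    ENNReal.ofReal_le_ofReal_iff (by positivity), ← le_div_iff₀ (by positivity), ← div_pow] at hvol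
  refine hvol.trans_eq ?_
  rw [hr_def]
  field_simp
  ring

theorem packingNumber_sphere_le {ε : ℝ≥0} (hε : 0 < ε) :
    packingNumber ε (sphere (0 : E) 1) ≤ ⌊(1 + 2 / (ε : ℝ)) ^ finrank ℝ E⌋₊ := by
  refine iSup₂_le fun C hC => iSup_le fun hsep => ?_
  by_contra! hlt
  obtain ⟨t, htC, ht⟩ := Set.exists_subset_encard_eq (Order.add_one_le_of_lt hlt)
  have htfin : t.Finite := Set.finite_of_encard_eq_coe ht
  have hcard := card_le_of_isSeparated_sphere hε (C := htfin.toFinset)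
    (by simpa using htC.trans hC) (by simpa using hsep.subset htC)
  rw [htfin.encard_eq_coe_toFinset_card] at ht
  have : htfin.toFinset.card = ⌊(1 + 2 / (ε : ℝ)) ^ finrank ℝ E⌋₊ + 1 := by
    exact_mod_cast ht
  rw [this] at hcard
  push_cast at hcard
  linarith [Nat.lt_floor_add_one ((1 + 2 / (ε : ℝ)) ^ finrank ℝ E)]

theorem exists_finset_isCover_sphere {ε : ℝ≥0} (hε : 0 < ε) :
    ∃ N : Finset E, (N : Set E) ⊆ sphere 0 1 ∧
      (N.card : ℝ) ≤ (1 + 2 / ε) ^ finrank ℝ E ∧ IsCover ε (sphere (0 : E) 1) N := by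
  have hfin : packingNumber ε (sphere (0 : E) 1) ≠ ⊤ :=
    ne_top_of_le_ne_top (by simp) (packingNumber_sphere_le hε)
  have hN : (maximalSeparatedSet ε (sphere (0 : E) 1)).Finite :=
    Set.encard_ne_top_iff.1 (encard_maximalSeparatedSet hfin ▸ hfin)
  refine ⟨hN.toFinset, by simpa using maximalSeparatedSet_subset, ?_,
    by simpa using isCover_maximalSeparatedSet hfin⟩
  exact card_le_of_isSeparated_sphere hε (by simpa using maximalSeparatedSet_subset)
    (by simpa using isSeparated_maximalSeparatedSet)

end SphereNet

theorem Submodule.exists_finset_isCover_sphere {F : Type*} [NormedAddCommGroup F]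
    [NormedSpace ℝ F] (W : Submodule ℝ F) [FiniteDimensional ℝ W] {ε : ℝ≥0} (hε : 0 < ε) :
    ∃ N : Finset F, (N : Set F) ⊆ W ∩ sphere 0 1 ∧
      (N.card : ℝ) ≤ (1 + 2 / ε) ^ finrank ℝ W ∧ IsCover ε (W ∩ sphere 0 1) (N : Set F) := by
  obtain ⟨N, hNs, hNcard, hNcov⟩ := _root_.exists_finset_isCover_sphere (E := W) hε
  have himage : (W : Set F) ∩ sphere 0 1 = (↑) '' sphere (0 : W) 1 := by
    ext x
    simp [and_comm]
  refine ⟨N.map (Function.Embedding.subtype _), ?_, by simpa using hNcard, ?_⟩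
  · rw [himage, Finset.coe_map, Function.Embedding.coe_subtype]
    exact Set.image_mono hNs
  · rw [himage, Finset.coe_map, Function.Embedding.coe_subtype]
    exact (isometry_subtype_coe.isCover_image_iff _).2 hNcov

theorem Metric.IsCover.exists_norm_sub_le {E : Type*} [SeminormedAddCommGroup E] {ε : ℝ≥0}
    {s N : Set E} (h : IsCover ε s N) {x : E} (hx : x ∈ s) : ∃ y ∈ N, ‖x - y‖ ≤ ε := by
  obtain ⟨y, hy, hxy⟩ := h hx
  refine ⟨y, hy, ?_⟩
  have : edist x y ≤ ε := hxy
  rwa [edist_nndist, ENNReal.coe_le_coe, ← NNReal.coe_le_coe, coe_nndist, dist_eq_norm] at this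

section NetBound

variable {E F : Type*} [NormedAddCommGroup E] [NormedSpace ℝ E] [NormedAddCommGroup F]
  [InnerProductSpace ℝ F] (f : E →L[ℝ] F) {U : Submodule ℝ F} {V : Submodule ℝ E}

theorem inner_le_mul_norm_mul_norm_of_sphere {S : ℝ}
    (hS : ∀ u ∈ (U : Set F) ∩ sphere 0 1, ∀ x ∈ (V : Set E) ∩ sphere 0 1, ⟪u, f x⟫ ≤ S)
    {u : F} (hu : u ∈ U) {x : E} (hx : x ∈ V) : ⟪u, f x⟫ ≤ S * (‖u‖ * ‖x‖) := by
  rcases eq_or_ne u 0 with rfl | hu0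
  · simp
  rcases eq_or_ne x 0 with rfl | hx0
  · simp
  have hnu : 0 < ‖u‖ := norm_pos_iff.2 hu0
  have hnx : 0 < ‖x‖ := norm_pos_iff.2 hx0
  have h := hS (‖u‖⁻¹ • u) ⟨U.smul_mem _ hu, by simp [norm_smul, hnu.ne']⟩
    (‖x‖⁻¹ • x) ⟨V.smul_mem _ hx, by simp [norm_smul, hnx.ne']⟩
  rw [map_smul, inner_smul_left, inner_smul_right, RCLike.conj_to_real] at h
  calc ⟪u, f x⟫ = (‖u‖ * ‖x‖) * (‖u‖⁻¹ * (‖x‖⁻¹ * ⟪u, f x⟫)) := by field_simp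
    _ ≤ (‖u‖ * ‖x‖) * S := by gcongr
    _ = S * (‖u‖ * ‖x‖) := mul_comm _ _

theorem inner_le_add_half_of_isCover {NU : Set F} {NV : Set E} (hNU : NU ⊆ U ∩ sphere 0 1)
    (hNV : NV ⊆ V ∩ sphere 0 1) (hU : IsCover (1 / 4) (U ∩ sphere 0 1) NU)
    (hV : IsCover (1 / 4) (V ∩ sphere 0 1) NV) {m : ℝ} (hm : ∀ y ∈ NU, ∀ z ∈ NV, ⟪y, f z⟫ ≤ m)
    {S : ℝ} (hS : ∀ u ∈ (U : Set F) ∩ sphere 0 1, ∀ x ∈ (V : Set E) ∩ sphere 0 1, ⟪u, f x⟫ ≤ S)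
    {u : F} (hu : u ∈ (U : Set F) ∩ sphere 0 1) {x : E} (hx : x ∈ (V : Set E) ∩ sphere 0 1) :
    ⟪u, f x⟫ ≤ m + S / 2 := by
  have hS0 : 0 ≤ S := by
    have := hS (-u) ⟨U.neg_mem hu.1, by simpa using hu.2⟩ x hx
    rw [inner_neg_left] at this
    linarith [hS u hu x hx]
  obtain ⟨y, hy, huy⟩ := hU.exists_norm_sub_le hu
  obtain ⟨z, hz, hxz⟩ := hV.exists_norm_sub_le hx
  obtain ⟨hyU, hy1⟩ := hNU hy
  obtain ⟨hxV, hx1⟩ := hx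
  rw [mem_sphere_zero_iff_norm] at hx1 hy1
  have h1 := inner_le_mul_norm_mul_norm_of_sphere f hS (U.sub_mem hu.1 hyU) hxV
  have h2 := inner_le_mul_norm_mul_norm_of_sphere f hS hyU (V.sub_mem hxV (hNV hz).1)
  rw [hx1] at h1
  rw [hy1] at h2
  have h3 := hm y hy z hz
  push_cast at huy hxz
  have : ⟪u, f x⟫ = ⟪y, f z⟫ + ⟪u - y, f x⟫ + ⟪y, f (x - z)⟫ := by
    rw [map_sub, inner_sub_left, inner_sub_right]; ring
  nlinarith

theorem inner_le_of_isCover {NU : Set F} {NV : Set E} (hNU : NU ⊆ U ∩ sphere 0 1)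
    (hNV : NV ⊆ V ∩ sphere 0 1) (hU : IsCover (1 / 4) (U ∩ sphere 0 1) NU)
    (hV : IsCover (1 / 4) (V ∩ sphere 0 1) NV) {m : ℝ} (hm : ∀ y ∈ NU, ∀ z ∈ NV, ⟪y, f z⟫ ≤ m)
    {u : F} (hu : u ∈ U) {x : E} (hx : x ∈ V) : ⟪u, f x⟫ ≤ 2 * m * (‖u‖ * ‖x‖) := by
  set P := (fun p : F × E => ⟪p.1, f p.2⟫) ''
    (((U : Set F) ∩ sphere 0 1) ×ˢ ((V : Set E) ∩ sphere 0 1))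
  have hbdd : BddAbove P := by
    refine ⟨‖f‖, ?_⟩
    rintro _ ⟨⟨u, x⟩, ⟨⟨-, hu⟩, ⟨-, hx⟩⟩, rfl⟩
    rw [mem_sphere_zero_iff_norm] at hu hx
    calc ⟪u, f x⟫ ≤ ‖u‖ * ‖f x‖ := real_inner_le_norm _ _
      _ ≤ ‖u‖ * (‖f‖ * ‖x‖) := by gcongr; exact f.le_opNorm x
      _ = ‖f‖ := by rw [hu, hx]; ring
  have hS : ∀ u ∈ (U : Set F) ∩ sphere 0 1, ∀ x ∈ (V : Set E) ∩ sphere 0 1, ⟪u, f x⟫ ≤ sSup P :=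
    fun u hu x hx => le_csSup hbdd ⟨(u, x), ⟨hu, hx⟩, rfl⟩
  refine inner_le_mul_norm_mul_norm_of_sphere f (fun u hu x hx => ?_) hu hx
  have : sSup P ≤ m + sSup P / 2 := csSup_le ⟨_, (u, x), ⟨hu, hx⟩, rfl⟩ <| by
    rintro _ ⟨⟨u, x⟩, ⟨hu, hx⟩, rfl⟩
    exact inner_le_add_half_of_isCover f hNU hNV hU hV hm hS hu hx
  linarith [hS u hu x hx]

end NetBound

theorem sq_norm_add_le_of_inner_le {F : Type*} [NormedAddCommGroup F] [InnerProductSpace ℝ F]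
    {a b : F} {α β : ℝ} (hb : ⟪b, b⟫ ≤ α * ‖b‖) (hab : ⟪a, b⟫ ≤ β * ‖a‖) :
    ‖a + b‖ ^ 2 ≤ ‖a‖ ^ 2 + 2 * β * ‖a‖ + α ^ 2 := by
  rw [real_inner_self_eq_norm_sq] at hb
  rw [norm_add_sq_real]
  nlinarith [sq_nonneg (‖b‖ - α)]

theorem sq_norm_add_apply_le_of_isCover {E F : Type*} [NormedAddCommGroup E] [NormedSpace ℝ E]
    [NormedAddCommGroup F] [InnerProductSpace ℝ F] (A M : E →L[ℝ] F) {V : Submodule ℝ E}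
    {NT NU : Set F} {NV : Set E} (hNT : NT ⊆ (⊤ : Submodule ℝ F) ∩ sphere 0 1)
    (hNTcov : IsCover (1 / 4) ((⊤ : Submodule ℝ F) ∩ sphere 0 1) NT)
    (hNV : NV ⊆ V ∩ sphere 0 1) (hNVcov : IsCover (1 / 4) (V ∩ sphere 0 1) NV)
    (hNU : NU ⊆ V.map A.toLinearMap ∩ sphere 0 1)
    (hNUcov : IsCover (1 / 4) (V.map A.toLinearMap ∩ sphere 0 1) NU) {a b : ℝ}
    (ha : ∀ y ∈ NT, ∀ z ∈ NV, ⟪y, M z⟫ ≤ a) (hb : ∀ y ∈ NU, ∀ z ∈ NV, ⟪y, M z⟫ ≤ b)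
    {x : E} (hx : x ∈ V) (hx1 : ‖x‖ = 1) :
    ‖(A + M) x‖ ^ 2 ≤ ‖A x‖ ^ 2 + 4 * b * ‖A x‖ + 4 * a ^ 2 := by
  have hM := inner_le_of_isCover M hNT hNV hNTcov hNVcov ha (Submodule.mem_top (x := M x)) hx
  have hAM : ⟪A x, M x⟫ ≤ 2 * b * (‖A x‖ * ‖x‖) :=
    inner_le_of_isCover M hNU hNV hNUcov hNVcov hb (Submodule.mem_map_of_mem hx) hx
  rw [hx1, mul_one] at hM hAM
  have := sq_norm_add_le_of_inner_le hM hAM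
  rw [_root_.add_apply]
  linarith

section Rademacher

variable {Ω : Type*} [MeasurableSpace Ω] {μ : Measure Ω} [IsProbabilityMeasure μ]

theorem hasSubgaussianMGF_one_of_rademacher {X : Ω → ℝ} (hX : Measurable X)
    (h1 : μ {ω | X ω = 1} = 1 / 2) (h2 : μ {ω | X ω = -1} = 1 / 2) :
    HasSubgaussianMGF X 1 μ := by
  set S := {ω | X ω = 1}
  have hS : MeasurableSet S := hX (measurableSet_singleton 1)
  have hT : MeasurableSet {ω | X ω = -1} := hX (measurableSet_singleton (-1))
  have hsign : ∀ᵐ ω ∂μ, X ω = 1 ∨ X ω = -1 := by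
    have hdisj : Disjoint S {ω | X ω = -1} :=
      Set.disjoint_left.2 fun ω (h : X ω = 1) (h' : X ω = -1) => by linarith
    have hunion : μ (S ∪ {ω | X ω = -1}) = 1 := by
      rw [measure_union hdisj hT, h1, h2, ENNReal.add_halves]
    exact (prob_compl_eq_zero_iff (hS.union hT)).2 hunion
  have hbound : ∀ᵐ ω ∂μ, X ω ∈ Set.Icc (-1) 1 := by
    filter_upwards [hsign] with ω hω
    rcases hω with h | h <;> simp [h]
  have hmean : μ[X] = 0 := by
    have hint : Integrable X μ := Integrable.of_mem_Icc (-1) 1 hX.aemeasurable hbound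
    have hS' : ∫ ω in S, X ω ∂μ = μ.real S := by
      rw [setIntegral_congr_fun hS fun ω (h : X ω = 1) => h]
      simp
    have hSc : ∫ ω in Sᶜ, X ω ∂μ = -μ.real Sᶜ := by
      rw [setIntegral_congr_ae hS.compl (by
        filter_upwards [hsign] with ω hω hωS using hω.resolve_left hωS)]
      simp
    rw [← integral_add_compl hS hint, hS', hSc, measureReal_def, measureReal_def,
      prob_compl_eq_one_sub hS, h1]
    norm_num
  have h := hasSubgaussianMGF_of_mem_Icc_of_integral_eq_zero hX.aemeasurable hbound hmean
  norm_num at h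
  exact h

end Rademacher

theorem Matrix.inner_toEuclideanCLM_eq_sum {n : ℕ} (M : Matrix (Fin n) (Fin n) ℝ)
    (y z : EuclideanSpace ℝ (Fin n)) :
    ⟪y, toEuclideanCLM (𝕜 := ℝ) M z⟫ = ∑ p : Fin n × Fin n, y p.1 * z p.2 * M p.1 p.2 := by
  simp only [inner_toEuclideanCLM, dotProduct, mulVec, Fintype.sum_prod_type, Finset.mul_sum]
  exact Finset.sum_congr rfl fun i _ => Finset.sum_congr rfl fun j _ => by ring

theorem mul_mul_exp_le_of_le_nine_pow {c₁ c₂ : ℝ} {k : ℕ} (h₁ : c₁ ≤ 9 ^ k) (h₂ : c₂ ≤ 9 ^ k)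
    (hc₂ : 0 ≤ c₂) : c₁ * c₂ * exp (-(4 * √k) ^ 2 / 2) ≤ exp (-2 * k) := by
  have h9 : (9 : ℝ) ^ k ≤ exp (3 * k) := by
    have h9 : (9 : ℝ) ≤ exp 3 := by
      calc (9 : ℝ) ≤ 2.7182818283 ^ 3 := by norm_num
        _ ≤ exp 1 ^ 3 := by gcongr; exact exp_one_gt_d9.le
        _ = exp 3 := by rw [← exp_nat_mul]; norm_num
    calc (9 : ℝ) ^ k ≤ exp 3 ^ k := by gcongr
      _ = exp (3 * k) := by rw [← exp_nat_mul, mul_comm]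
  have hsq : -(4 * √k) ^ 2 / 2 = -8 * (k : ℝ) := by
    rw [mul_pow, sq_sqrt k.cast_nonneg]; ring
  calc c₁ * c₂ * exp (-(4 * √k) ^ 2 / 2) ≤ exp (3 * k) * exp (3 * k) * exp (-8 * k) := by
        rw [hsq]; gcongr; exacts [h₁.trans h9, h₂.trans h9]
    _ = exp (-2 * k) := by rw [← exp_add, ← exp_add]; ring_nf

namespace IsBernoulliMatrix

variable {Ω : Type} [MeasurableSpace Ω] {μ : Measure Ω} [IsProbabilityMeasure μ] {n : ℕ}
  {E : Ω → Matrix (Fin n) (Fin n) ℝ}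

theorem measureReal_le_inner_le (hE : IsBernoulliMatrix μ E) {y z : EuclideanSpace ℝ (Fin n)}
    (hy : ‖y‖ = 1) (hz : ‖z‖ = 1) {a : ℝ} (ha : 0 ≤ a) :
    μ.real {ω | a ≤ ⟪y, toEuclideanCLM (𝕜 := ℝ) (E ω) z⟫} ≤ exp (-a ^ 2 / 2) := by
  obtain ⟨hmeas, hindep, hprob⟩ := hE
  have hsubG (p : Fin n × Fin n) : HasSubgaussianMGF (fun ω => y p.1 * z p.2 * E ω p.1 p.2)
      (‖y p.1 * z p.2‖₊ ^ 2) μ := by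
    convert (hasSubgaussianMGF_one_of_rademacher (hmeas p.1 p.2)
      (hprob p.1 p.2).1 (hprob p.1 p.2).2).const_mul (y p.1 * z p.2) using 1
    ext
    change _ = (y p.1 * z p.2) ^ 2 * 1
    simp [← abs_mul]
  have hvar : ∑ p : Fin n × Fin n, (y p.1 * z p.2) ^ 2 = 1 := by
    have hsq (x : EuclideanSpace ℝ (Fin n)) : ∑ i, x i ^ 2 = ‖x‖ ^ 2 := by
      simp [EuclideanSpace.norm_sq_eq]
    simp_rw [Fintype.sum_prod_type, mul_pow, ← Finset.mul_sum, ← Finset.sum_mul, hsq, hy, hz]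
    norm_num
  have h := HasSubgaussianMGF.measure_sum_ge_le_of_iIndepFun
    (hindep.comp (fun p x => y p.1 * z p.2 * x) fun p => measurable_const_mul _)
    (s := Finset.univ) (fun p _ => hsubG p) ha
  simp only [NNReal.coe_sum, NNReal.coe_pow, coe_nnnorm, Real.norm_eq_abs, sq_abs, hvar,
    mul_one] at h
  simpa only [Matrix.inner_toEuclideanCLM_eq_sum, Function.comp_apply] using h

theorem measureReal_exists_lt_inner_le (hE : IsBernoulliMatrix μ E)
    {N₁ N₂ : Finset (EuclideanSpace ℝ (Fin n))} (h₁ : ↑N₁ ⊆ sphere (0 : EuclideanSpace ℝ (Fin n)) 1)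
    (h₂ : ↑N₂ ⊆ sphere (0 : EuclideanSpace ℝ (Fin n)) 1) {a : ℝ} (ha : 0 ≤ a) :
    μ.real {ω | ∃ y ∈ N₁, ∃ z ∈ N₂, a < ⟪y, toEuclideanCLM (𝕜 := ℝ) (E ω) z⟫}
      ≤ (N₁.card : ℝ) * N₂.card * exp (-a ^ 2 / 2) := by
  calc _ ≤ μ.real (⋃ y ∈ N₁, ⋃ z ∈ N₂, {ω | a ≤ ⟪y, toEuclideanCLM (𝕜 := ℝ) (E ω) z⟫}) := by
        refine measureReal_mono (fun ω ⟨y, hy, z, hz, h⟩ => ?_) (measure_ne_top _ _)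
        simp only [Set.mem_iUnion]
        exact ⟨y, hy, z, hz, h.le⟩
    _ ≤ ∑ y ∈ N₁, ∑ z ∈ N₂, μ.real {ω | a ≤ ⟪y, toEuclideanCLM (𝕜 := ℝ) (E ω) z⟫} :=
        (measureReal_biUnion_finset_le _ _).trans
          (Finset.sum_le_sum fun _ _ => measureReal_biUnion_finset_le _ _)
    _ ≤ ∑ y ∈ N₁, ∑ z ∈ N₂, exp (-a ^ 2 / 2) := by
        gcongr with y hy z hz
        exact hE.measureReal_le_inner_le (mem_sphere_zero_iff_norm.1 (h₁ hy))
          (mem_sphere_zero_iff_norm.1 (h₂ hz)) ha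
    _ = (N₁.card : ℝ) * N₂.card * exp (-a ^ 2 / 2) := by simp [mul_assoc]

theorem measureReal_exists_sq_norm_add_gt_le (hE : IsBernoulliMatrix μ E)
    (A : Matrix (Fin n) (Fin n) ℝ) (V : Submodule ℝ (EuclideanSpace ℝ (Fin n))) {k : ℕ}
    (hV : finrank ℝ V ≤ k) :
    μ.real {ω | ∃ x ∈ V, ‖x‖ = 1 ∧
      ‖toEuclideanCLM (𝕜 := ℝ) A x‖ ^ 2 + 16 * √k * ‖toEuclideanCLM (𝕜 := ℝ) A x‖ + 64 * n
        < ‖toEuclideanCLM (𝕜 := ℝ) (A + E ω) x‖ ^ 2} ≤ exp (-2 * n) + exp (-2 * k) := by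
  set T : Submodule ℝ (EuclideanSpace ℝ (Fin n)) := ⊤
  set U := V.map (toEuclideanCLM (𝕜 := ℝ) A).toLinearMap
  have h9 : 1 + 2 / ((1 / 4 : ℝ≥0) : ℝ) = 9 := by norm_num
  obtain ⟨NT, hNT, hNTcard, hNTcov⟩ := T.exists_finset_isCover_sphere (ε := 1 / 4) (by norm_num)
  obtain ⟨NV, hNV, hNVcard, hNVcov⟩ := V.exists_finset_isCover_sphere (ε := 1 / 4) (by norm_num)
  obtain ⟨NU, hNU, hNUcard, hNUcov⟩ := U.exists_finset_isCover_sphere (ε := 1 / 4) (by norm_num)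
  rw [h9] at hNTcard hNVcard hNUcard
  have hTn : finrank ℝ T = n := by simp [T]
  have hVn : finrank ℝ V ≤ n := by simpa using Submodule.finrank_le V
  have hUk : finrank ℝ U ≤ k := (Submodule.finrank_map_le _ _).trans hV
  refine (measureReal_mono (s₂ :=
    {ω | ∃ y ∈ NT, ∃ z ∈ NV, 4 * √n < ⟪y, toEuclideanCLM (𝕜 := ℝ) (E ω) z⟫} ∪
      {ω | ∃ y ∈ NU, ∃ z ∈ NV, 4 * √k < ⟪y, toEuclideanCLM (𝕜 := ℝ) (E ω) z⟫})
    ?_ (measure_ne_top _ _)).trans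
    ((measureReal_union_le _ _).trans (add_le_add ?_ ?_))
  · rintro ω ⟨x, hxV, hx1, hlt⟩
    by_contra hω
    simp only [Set.mem_union, Set.mem_ofPred_eq, not_or, not_exists, not_and, not_lt] at hω
    have := sq_norm_add_apply_le_of_isCover _ _ hNT hNTcov hNV hNVcov hNU hNUcov hω.1 hω.2 hxV hx1
    rw [← map_add, mul_pow, sq_sqrt n.cast_nonneg] at this
    linarith
  · refine (hE.measureReal_exists_lt_inner_le (hNT.trans Set.inter_subset_right)
      (hNV.trans Set.inter_subset_right) (by positivity)).trans
      (mul_mul_exp_le_of_le_nine_pow (hNTcard.trans_eq (by rw [hTn])) ?_ (by positivity))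
    exact hNVcard.trans (pow_le_pow_right₀ (by norm_num) hVn)
  · refine (hE.measureReal_exists_lt_inner_le (hNU.trans Set.inter_subset_right)
      (hNV.trans Set.inter_subset_right) (by positivity)).trans
      (mul_mul_exp_le_of_le_nine_pow ?_ ?_ (by positivity))
    · exact hNUcard.trans (pow_le_pow_right₀ (by norm_num) hUk)
    · exact hNVcard.trans (pow_le_pow_right₀ (by norm_num) hV)

end IsBernoulliMatrix

theorem one_sub_ofReal_le_measure {Ω : Type*} [MeasurableSpace Ω] {μ : Measure Ω}
    [IsProbabilityMeasure μ] {s : Set Ω} {η : ℝ} (h : μ.real sᶜ ≤ η) :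
    1 - ENNReal.ofReal η ≤ μ s := by
  rw [tsub_le_iff_right]
  calc 1 = μ (s ∪ sᶜ) := by rw [Set.union_compl_self, measure_univ]
    _ ≤ μ s + μ sᶜ := measure_union_le _ _
    _ ≤ μ s + ENNReal.ofReal η := by
        gcongr
        rw [← ofReal_measureReal]
        exact ENNReal.ofReal_le_ofReal h

theorem tendsto_exp_neg_two_mul_add_exp_neg_two_mul_rpow {γ : ℝ} (hγ : 0 < γ) :
    Tendsto (fun n : ℕ => exp (-2 * n) + exp (-2 * (n : ℝ) ^ γ)) atTop (𝓝 0) := by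
  have h (f : ℕ → ℝ) (hf : Tendsto f atTop atTop) :
      Tendsto (fun n => exp (-2 * f n)) atTop (𝓝 0) :=
    tendsto_exp_atBot.comp (tendsto_neg_atTop_atBot.comp
      (hf.const_mul_atTop two_pos) |>.congr fun n => by simp)
  simpa using (h _ tendsto_natCast_atTop_atTop).add
    (h _ ((tendsto_rpow_atTop hγ).comp tendsto_natCast_atTop_atTop))

theorem sq_eucNorm_add_mulVec_le {n d : ℕ} {A M : Matrix (Fin n) (Fin n) ℝ}
    {v : Fin n → Fin n → ℝ} (hov : ∀ i j : Fin n, ∑ l, v i l * v j l = if i = j then 1 else 0)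
    (heig : ∀ i : Fin n, (Aᵀ * A) *ᵥ v i = singVal A (i.val + 1) ^ 2 • v i)
    (hlog : 1 ≤ log n) {x : Fin n → ℝ} (hx : eucNorm x = 1)
    (h : ‖toEuclideanCLM (𝕜 := ℝ) (A + M) (WithLp.toLp 2 x)‖ ^ 2 ≤
      ‖toEuclideanCLM (𝕜 := ℝ) A (WithLp.toLp 2 x)‖ ^ 2 +
        16 * √d * ‖toEuclideanCLM (𝕜 := ℝ) A (WithLp.toLp 2 x)‖ + 64 * n) :
    eucNorm ((A + M) *ᵥ x) ^ 2 ≤ (∑ i, (∑ l, x l * v i l) ^ 2 * singVal A (i.val + 1) ^ 2) +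
      64 * (n + singVal A 1 * √(d * log n)) := by
  simp only [toEuclideanCLM_toLp, ← eucNorm_eq_norm_toLp] at h
  rw [sq_eucNorm_mulVec A, dotProduct_mulVec_eq_sum_of_orthonormal _ v _ hov heig] at h
  have hA := eucNorm_mulVec_le_singVal_one A hx
  have hσ : 0 ≤ singVal A 1 := (sqrt_nonneg _).trans hA
  have hd : √d * eucNorm (A *ᵥ x) ≤ √(d * log n) * singVal A 1 :=
    mul_le_mul (sqrt_le_sqrt (le_mul_of_one_le_right d.cast_nonneg hlog)) hA (sqrt_nonneg _)
      (sqrt_nonneg _)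
  nlinarith [mul_nonneg hσ (sqrt_nonneg (d * log n))]

theorem key_subspace_lemma_general (β₁ β₂ : ℝ) (hβ₂1 : β₂ < 1) :
    ∃ C : ℝ, 0 < C ∧ ∀ η : ℝ, 0 < η → ∃ n₀ : ℕ, ∀ n ≥ n₀,
      ∀ (A : Matrix (Fin n) (Fin n) ℝ) (v : Fin n → Fin n → ℝ) (d : ℕ)
        (Ω : Type) [MeasurableSpace Ω] (μ : Measure Ω) [IsProbabilityMeasure μ]
        (E : Ω → Matrix (Fin n) (Fin n) ℝ),
        (∀ i j : Fin n, ∑ l, v i l * v j l = if i = j then 1 else 0) →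
        (∀ i : Fin n, (Aᵀ * A).mulVec (v i) = singVal A (i.val + 1) ^ 2 • v i) →
        singVal A 1 ≤ (n : ℝ) ^ β₁ →
        (n : ℝ) ^ (1 - β₂) ≤ (d : ℝ) →
        IsBernoulliMatrix μ E →
        μ {ω | ∀ x : Fin n → ℝ,
              x ∈ Submodule.span ℝ {y : Fin n → ℝ | ∃ i : Fin n, i.val < d ∧ y = v i} →
              eucNorm x = 1 →
              eucNorm ((A + E ω).mulVec x) ^ 2 ≤
                (∑ i, (∑ l, x l * v i l) ^ 2 * singVal A (i.val + 1) ^ 2) +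
                  C * (n + singVal A 1 * Real.sqrt (d * Real.log n))}
          ≥ 1 - ENNReal.ofReal η := by
  refine ⟨64, by norm_num, fun η hη => ?_⟩
  obtain ⟨n₀, hn₀⟩ := eventually_atTop.1 <|
    ((tendsto_exp_neg_two_mul_add_exp_neg_two_mul_rpow (sub_pos.2 hβ₂1)).eventually
      (gt_mem_nhds hη)).and (eventually_ge_atTop 3)
  refine ⟨n₀, fun n hn A v d Ω _ μ _ E hov heig _ hd hE => ?_⟩
  obtain ⟨hsmall, hn3⟩ := hn₀ n hn
  have hlog : 1 ≤ log n := (le_log_iff_exp_le (by positivity)).2 <|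
    (exp_one_lt_d9.trans (by norm_num : (2.7182818286 : ℝ) < 3)).le.trans (by exact_mod_cast hn3)
  set V := (Submodule.span ℝ {y : Fin n → ℝ | ∃ i : Fin n, i.val < d ∧ y = v i}).map
    (WithLp.linearEquiv 2 ℝ (Fin n → ℝ)).symm.toLinearMap
  have hV : finrank ℝ V ≤ d :=
    (LinearEquiv.finrank_map_eq _ _).trans_le (finrank_span_setOf_val_lt_le v d)
  refine one_sub_ofReal_le_measure (((measureReal_mono ?_ (measure_ne_top _ _)).trans
    (hE.measureReal_exists_sq_norm_add_gt_le A V hV)).trans ?_)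
  · intro ω hω
    simp only [Set.mem_compl_iff, Set.mem_ofPred_eq, not_forall] at hω
    obtain ⟨x, hxS, hx1, hlt⟩ := hω
    refine ⟨WithLp.toLp 2 x, Submodule.mem_map_of_mem hxS, by rwa [← eucNorm_eq_norm_toLp], ?_⟩
    by_contra! h
    exact hlt (sq_eucNorm_add_mulVec_le hov heig hlog hx1 h)
  · have : exp (-2 * d) ≤ exp (-2 * (n : ℝ) ^ (1 - β₂)) := exp_le_exp.2 (by linarith)
    linarith

/-- Key lemma (Lemma 2.6): for constants `β₁ > 0`, `0 < β₂ < 1` there is `C` such that if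
`σ₁ ≤ n^β₁`, `V = span{v₁, …, v_d}` with `d ≥ n^(1-β₂)`, and `E` is a random Bernoulli
matrix, then with probability at least `1 - η`, simultaneously for all unit `v ∈ V`:
`‖(A+E)v‖² ≤ ∑ᵢ (v·vᵢ)² σᵢ² + C(n + σ₁√(d log n))`. -/
theorem key_subspace_lemma (β₁ β₂ : ℝ) (hβ₁ : 0 < β₁) (hβ₂0 : 0 < β₂) (hβ₂1 : β₂ < 1) :
    ∃ C : ℝ, 0 < C ∧ ∀ η : ℝ, 0 < η → ∃ n₀ : ℕ, ∀ n ≥ n₀,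
      ∀ (A : Matrix (Fin n) (Fin n) ℝ) (v : Fin n → Fin n → ℝ) (d : ℕ)
        (Ω : Type) [MeasurableSpace Ω] (μ : Measure Ω) [IsProbabilityMeasure μ]
        (E : Ω → Matrix (Fin n) (Fin n) ℝ),
        (∀ i j : Fin n, ∑ l, v i l * v j l = if i = j then 1 else 0) →
        (∀ i : Fin n, (Aᵀ * A).mulVec (v i) = singVal A (i.val + 1) ^ 2 • v i) →
        singVal A 1 ≤ (n : ℝ) ^ β₁ →
        (n : ℝ) ^ (1 - β₂) ≤ (d : ℝ) →
        IsBernoulliMatrix μ E →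
        μ {ω | ∀ x : Fin n → ℝ,
              x ∈ Submodule.span ℝ {y : Fin n → ℝ | ∃ i : Fin n, i.val < d ∧ y = v i} →
              eucNorm x = 1 →
              eucNorm ((A + E ω).mulVec x) ^ 2 ≤
                (∑ i, (∑ l, x l * v i l) ^ 2 * singVal A (i.val + 1) ^ 2) +
                  C * (n + singVal A 1 * Real.sqrt (d * Real.log n))}
          ≥ 1 - ENNReal.ofReal η :=
  key_subspace_lemma_general β₁ β₂ hβ₂1
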